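/- arXiv:1405.6606 — 9 statements merged into one kernel-verified Lean document; each statement's English description precedes it below -/
import Mathlib

section
/- There exist two collections of points a₁,…,aₙ and b₁,…,bₙ in ℝ² with |aᵢ − aⱼ| ≥ |bᵢ − bⱼ| for all i, j, but with area(Conv{a₁,…,aₙ}) < area(Conv{b₁,…,bₙ}). -/
/-!
Take two unit segments from the origin, once at a right angle and once at a straight angle.
Opening the hinge keeps the two legs and stretches the distance between their endpoints from
`√2` to `2`, yet it flattens a triangle of area `1/2` into three collinear points, whose convex
hull is a null set.
-/

open MeasureTheory Module

section ConvexHullMeasure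

variable {E : Type*} [NormedAddCommGroup E] [NormedSpace ℝ E] [MeasurableSpace E] [BorelSpace E]
  [FiniteDimensional ℝ E] (μ : Measure E) [μ.IsAddHaarMeasure]

theorem addHaar_convexHull_pos_iff {s : Set E} :
    0 < μ (convexHull ℝ s) ↔ affineSpan ℝ s = ⊤ := by
  refine ⟨fun h => ?_, fun h => ?_⟩
  · by_contra hs
    refine h.ne' (measure_mono_null ?_ (Measure.addHaar_affineSubspace μ _ hs))
    exact convexHull_min (subset_affineSpan ℝ s) (affineSpan ℝ s).convex
  · exact Measure.measure_pos_of_nonempty_interior μ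
      (interior_convexHull_nonempty_iff_affineSpan_eq_top.2 h)

theorem Collinear.affineSpan_ne_top {k V P : Type*} [DivisionRing k] [AddCommGroup V]
    [Module k V] [AddTorsor V P] [FiniteDimensional k V] {s : Set P} (h : Collinear k s)
    (hV : 1 < finrank k V) : affineSpan k s ≠ ⊤ := by
  intro hs
  have := (collinear_iff_finrank_le_one (k := k)).1 h
  rw [← direction_affineSpan, hs, AffineSubspace.direction_top, finrank_top] at this
  omega

theorem Collinear.addHaar_convexHull_eq_zero {s : Set E} (h : Collinear ℝ s)
    (hE : 1 < finrank ℝ E) : μ (convexHull ℝ s) = 0 := by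
  by_contra h0
  exact h.affineSpan_ne_top hE ((addHaar_convexHull_pos_iff μ).1 (pos_iff_ne_zero.2 h0))

end ConvexHullMeasure

theorem EuclideanSpace.dist_of_fin_two (x y x' y' : ℝ) :
    dist !₂[x, y] !₂[x', y'] = √((x - x') ^ 2 + (y - y') ^ 2) := by
  simp [EuclideanSpace.dist_eq, Fin.sum_univ_two, Real.dist_eq, sq_abs]

def rightHinge : Fin 3 → EuclideanSpace ℝ (Fin 2) := ![!₂[0, 0], !₂[1, 0], !₂[0, 1]]

def straightHinge : Fin 3 → EuclideanSpace ℝ (Fin 2) := ![!₂[0, 0], !₂[1, 0], !₂[-1, 0]]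

theorem dist_rightHinge_le_dist_straightHinge (i j : Fin 3) :
    dist (rightHinge i) (rightHinge j) ≤ dist (straightHinge i) (straightHinge j) := by
  fin_cases i <;> fin_cases j <;>
    simp only [rightHinge, straightHinge, Fin.zero_eta, Fin.mk_one, Fin.reduceFinMk,
      Matrix.cons_val, EuclideanSpace.dist_of_fin_two] <;>
    exact Real.sqrt_le_sqrt (by norm_num)

theorem collinear_range_straightHinge : Collinear ℝ (Set.range straightHinge) := by
  rw [collinear_iff_of_mem (Set.mem_range_self 0)]
  refine ⟨!₂[1, 0], ?_⟩
  rintro _ ⟨i, rfl⟩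
  fin_cases i
  · exact ⟨0, by simp [straightHinge]⟩
  · exact ⟨1, by simp [straightHinge]⟩
  · exact ⟨-1, by ext j; fin_cases j <;> simp [straightHinge]⟩

theorem affineSpan_range_rightHinge : affineSpan ℝ (Set.range rightHinge) = ⊤ := by
  have h0 : (!₂[0, 0] : EuclideanSpace ℝ (Fin 2)) = 0 := by ext j; fin_cases j <;> rfl
  apply SetLike.coe_injective
  rw [rightHinge, Matrix.range_cons, Set.singleton_union, h0, affineSpan_insert_zero,
    AffineSubspace.top_coe, ← Submodule.top_coe (R := ℝ),
    ← (EuclideanSpace.basisFun (Fin 2) ℝ).toBasis.span_eq]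
  congr 3
  ext i j
  fin_cases i <;> fin_cases j <;> simp

/-- There exist configurations with `|aᵢ - aⱼ| ≥ |bᵢ - bⱼ|` for all `i, j` but with
`area (Conv {aᵢ}) < area (Conv {bᵢ})`. -/
theorem stmt3 :
    ∃ (n : ℕ) (a b : Fin n → EuclideanSpace ℝ (Fin 2)),
      (∀ i j, dist (b i) (b j) ≤ dist (a i) (a j)) ∧
      MeasureTheory.volume (convexHull ℝ (Set.range a)) <
        MeasureTheory.volume (convexHull ℝ (Set.range b)) := by
  refine ⟨3, straightHinge, rightHinge, dist_rightHinge_le_dist_straightHinge, ?_⟩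
  rw [collinear_range_straightHinge.addHaar_convexHull_eq_zero volume (by simp)]
  exact (addHaar_convexHull_pos_iff volume).2 affineSpan_range_rightHinge
end

section
/- Let a₁,…,aₙ and b₁,…,bₙ be two collections of points in ℝ². Viewing ℝ² as ℝ² × {0} ⊂ ℝ⁴ = ℝ² × ℝ², define αᵢ(t) = ((aᵢ + bᵢ)/2 + cos(πt)·(aᵢ − bᵢ)/2, sin(πt)·(aᵢ − bᵢ)/2). Then αᵢ(0) = (aᵢ, 0), αᵢ(1) = (bᵢ, 0), and for each pair i, j the function t ↦ |αᵢ(t) − αⱼ(t)| is monotone on [0,1]. -/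
/-!
Writing `u` and `v` for the differences of the midpoints `(aᵢ + bᵢ)/2` and of the half-chords
`(aᵢ - bᵢ)/2`, the difference `αᵢ(t) - αⱼ(t)` is `(u + cos(πt) v, sin(πt) v)`, whose squared norm
is `‖u‖² + ‖v‖² + 2 cos(πt) ⟪u, v⟫` since `cos² + sin² = 1`. As `cos(πt)` decreases on `[0, 1]`,
the squared distance, hence the distance, is monotone in `t`, increasing or decreasing according to
the sign of `⟪u, v⟫`.
-/

open Real

open scoped RealInnerProductSpace

section

variable {E : Type*} [NormedAddCommGroup E] [InnerProductSpace ℝ E]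

theorem norm_toLp_add_cos_smul_sin_smul_sq (u v : E) (θ : ℝ) :
    ‖WithLp.toLp 2 (u + cos θ • v, sin θ • v)‖ ^ 2 = ‖u‖ ^ 2 + ‖v‖ ^ 2 + 2 * cos θ * ⟪u, v⟫ := by
  rw [WithLp.prod_norm_sq_eq_of_L2, WithLp.toLp_fst, WithLp.toLp_snd, norm_add_sq_real, real_inner_smul_right, norm_smul,
    norm_smul, mul_pow, mul_pow, norm_eq_abs, norm_eq_abs, sq_abs, sq_abs]
  linear_combination ‖v‖ ^ 2 * sin_sq_add_cos_sq θ

noncomputable def alexanderCurve (a b : E) (t : ℝ) : WithLp 2 (E × E) :=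
  WithLp.toLp 2 ((2:ℝ)⁻¹ • (a + b) + (cos (π * t) * (2:ℝ)⁻¹) • (a - b),
    (sin (π * t) * (2:ℝ)⁻¹) • (a - b))

theorem alexanderCurve_zero (a b : E) : alexanderCurve a b 0 = WithLp.toLp 2 (a, 0) := by
  simp only [alexanderCurve, mul_zero, cos_zero, sin_zero, one_mul, zero_mul, zero_smul]
  congr 2
  module

theorem alexanderCurve_one (a b : E) : alexanderCurve a b 1 = WithLp.toLp 2 (b, 0) := by
  simp only [alexanderCurve, mul_one, cos_pi, sin_pi, neg_one_mul, zero_mul, zero_smul]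
  congr 2
  module

theorem alexanderCurve_sub_alexanderCurve (a b a' b' : E) (t : ℝ) :
    alexanderCurve a b t - alexanderCurve a' b' t =
      WithLp.toLp 2 ((2:ℝ)⁻¹ • ((a + b) - (a' + b')) + cos (π * t) • (2:ℝ)⁻¹ • ((a - b) - (a' - b')),
        sin (π * t) • (2:ℝ)⁻¹ • ((a - b) - (a' - b'))) := by
  rw [alexanderCurve, alexanderCurve, ← WithLp.toLp_sub, Prod.mk_sub_mk]
  congr 2 <;> module

theorem dist_alexanderCurve_sq (a b a' b' : E) (t : ℝ) :
    dist (alexanderCurve a b t) (alexanderCurve a' b' t) ^ 2 =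
      ‖(2:ℝ)⁻¹ • ((a + b) - (a' + b'))‖ ^ 2 + ‖(2:ℝ)⁻¹ • ((a - b) - (a' - b'))‖ ^ 2 +
        2 * ⟪(2:ℝ)⁻¹ • ((a + b) - (a' + b')), (2:ℝ)⁻¹ • ((a - b) - (a' - b'))⟫ *
          cos (π * t) := by
  rw [dist_eq_norm, alexanderCurve_sub_alexanderCurve, norm_toLp_add_cos_smul_sin_smul_sq]
  ring

end

theorem antitoneOn_cos_pi_mul : AntitoneOn (fun t => cos (π * t)) (Set.Icc 0 1) := by
  refine antitoneOn_cos.comp_MonotoneOn (fun s _ t _ hst => by gcongr) fun t ht => ?_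
  exact ⟨by nlinarith [pi_pos, ht.1], by nlinarith [pi_pos, ht.2]⟩

theorem monotoneOn_or_antitoneOn_of_sq_eq {f c : ℝ → ℝ} {s : Set ℝ} {p q : ℝ}
    (hf₀ : ∀ t, 0 ≤ f t) (hf : ∀ t, f t ^ 2 = p + q * c t) (hc : AntitoneOn c s) :
    MonotoneOn f s ∨ AntitoneOn f s := by
  have sq_le_iff (x y : ℝ) : f x ^ 2 ≤ f y ^ 2 ↔ f x ≤ f y :=
    pow_le_pow_iff_left₀ (hf₀ x) (hf₀ y) two_ne_zero
  rcases le_or_gt q 0 with hq | hq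
  · refine .inl fun x hx y hy hxy => (sq_le_iff x y).1 ?_
    rw [hf, hf]
    nlinarith [hc hx hy hxy]
  · refine .inr fun x hx y hy hxy => (sq_le_iff y x).1 ?_
    rw [hf, hf]
    nlinarith [hc hx hy hxy]

/-- Alexander's curves: `αᵢ(t) = ((aᵢ+bᵢ)/2 + cos(πt)·(aᵢ-bᵢ)/2, sin(πt)·(aᵢ-bᵢ)/2)` in
`ℝ⁴ = ℝ² × ℝ²` satisfy `αᵢ(0) = (aᵢ,0)`, `αᵢ(1) = (bᵢ,0)`, and for each pair `i, j` the
function `t ↦ |αᵢ(t) - αⱼ(t)|` is monotone on `[0,1]`. -/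
theorem stmt4 {n : ℕ} (a b : Fin n → EuclideanSpace ℝ (Fin 2))
    (α : Fin n → ℝ → WithLp 2 (EuclideanSpace ℝ (Fin 2) × EuclideanSpace ℝ (Fin 2)))
    (hα : ∀ i t, α i t =
      (WithLp.equiv 2 (EuclideanSpace ℝ (Fin 2) × EuclideanSpace ℝ (Fin 2))).symm
        ((2:ℝ)⁻¹ • (a i + b i) + (Real.cos (Real.pi * t) * (2:ℝ)⁻¹) • (a i - b i),
         (Real.sin (Real.pi * t) * (2:ℝ)⁻¹) • (a i - b i))) :
    (∀ i, α i 0 =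
        (WithLp.equiv 2 (EuclideanSpace ℝ (Fin 2) × EuclideanSpace ℝ (Fin 2))).symm (a i, 0)) ∧
    (∀ i, α i 1 =
        (WithLp.equiv 2 (EuclideanSpace ℝ (Fin 2) × EuclideanSpace ℝ (Fin 2))).symm (b i, 0)) ∧
    (∀ i j, MonotoneOn (fun t => dist (α i t) (α j t)) (Set.Icc (0:ℝ) 1) ∨
      AntitoneOn (fun t => dist (α i t) (α j t)) (Set.Icc (0:ℝ) 1)) := by
  have hα' : α = fun i => alexanderCurve (a i) (b i) := funext₂ hα
  subst hα'
  refine ⟨fun i => alexanderCurve_zero _ _, fun i => alexanderCurve_one _ _, fun i j => ?_⟩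
  exact monotoneOn_or_antitoneOn_of_sq_eq (fun _ => dist_nonneg)
    (fun t => dist_alexanderCurve_sq _ _ _ _ t) antitoneOn_cos_pi_mul
end

section
/- With the curves αᵢ(t) = ((aᵢ + bᵢ)/2 + cos(πt)·(aᵢ − bᵢ)/2, sin(πt)·(aᵢ − bᵢ)/2) in ℝ⁴ = ℝ² × ℝ²: if |aᵢ − aⱼ| = |bᵢ − bⱼ| then |αᵢ(t) − αⱼ(t)| = |aᵢ − aⱼ| for all t ∈ [0,1]. -/
/-!
The difference `αᵢ(t) - αⱼ(t)` is the same curve built from `u = aᵢ - aⱼ` and `v = bᵢ - bⱼ`,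
namely `((u + v)/2 + cos(πt)·(u - v)/2, sin(πt)·(u - v)/2)`. When `‖u‖ = ‖v‖` the vectors
`u + v` and `u - v` are orthogonal, so its squared length is
`‖(u + v)/2‖² + (cos² + sin²)‖(u - v)/2‖²`, which is `‖u‖²` by the parallelogram law.
-/

open Real

theorem norm_sq_add_norm_sq_eq_of_norm_eq {E : Type*} [NormedAddCommGroup E]
    [InnerProductSpace ℝ E] {u v : E} (huv : ‖u‖ = ‖v‖) {c s : ℝ} (hcs : c ^ 2 + s ^ 2 = 1) :
    ‖(2:ℝ)⁻¹ • (u + v) + (c * 2⁻¹) • (u - v)‖ ^ 2 + ‖(s * 2⁻¹) • (u - v)‖ ^ 2 = ‖u‖ ^ 2 := by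
  have horth : inner ℝ ((2:ℝ)⁻¹ • (u + v)) ((c * 2⁻¹) • (u - v)) = 0 := by
    rw [real_inner_smul_left, real_inner_smul_right, (real_inner_add_sub_eq_zero_iff u v).2 huv,
      mul_zero, mul_zero]
  rw [sq, norm_add_sq_eq_norm_sq_add_norm_sq_real horth, norm_smul, norm_smul, norm_smul]
  have hpar := parallelogram_law_with_norm ℝ u v
  rw [← huv] at hpar
  simp only [Real.norm_eq_abs, abs_mul, abs_inv, abs_two]
  linear_combination hpar / 4 + ‖u - v‖ ^ 2 / 4 * (sq_abs c + sq_abs s + hcs)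

/-- With the curves `αᵢ(t) = ((aᵢ+bᵢ)/2 + cos(πt)·(aᵢ-bᵢ)/2, sin(πt)·(aᵢ-bᵢ)/2)` in
`ℝ⁴ = ℝ² × ℝ²`: if `|aᵢ - aⱼ| = |bᵢ - bⱼ|` then `|αᵢ(t) - αⱼ(t)| = |aᵢ - aⱼ|` for all
`t ∈ [0,1]`. -/
theorem stmt5 {n : ℕ} (a b : Fin n → EuclideanSpace ℝ (Fin 2))
    (α : Fin n → ℝ → WithLp 2 (EuclideanSpace ℝ (Fin 2) × EuclideanSpace ℝ (Fin 2)))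
    (hα : ∀ i t, α i t =
      (WithLp.equiv 2 (EuclideanSpace ℝ (Fin 2) × EuclideanSpace ℝ (Fin 2))).symm
        ((2:ℝ)⁻¹ • (a i + b i) + (Real.cos (Real.pi * t) * (2:ℝ)⁻¹) • (a i - b i),
         (Real.sin (Real.pi * t) * (2:ℝ)⁻¹) • (a i - b i)))
    (i j : Fin n) (hij : dist (a i) (a j) = dist (b i) (b j)) :
    ∀ t ∈ Set.Icc (0:ℝ) 1, dist (α i t) (α j t) = dist (a i) (a j) := by
  intro t _
  set u := a i - a j
  set v := b i - b j
  have hdiff : α i t - α j t = WithLp.toLp 2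
      ((2:ℝ)⁻¹ • (u + v) + (cos (π * t) * 2⁻¹) • (u - v), (sin (π * t) * 2⁻¹) • (u - v)) := by
    rw [hα, hα, WithLp.ext_iff, WithLp.ofLp_sub]
    simp only [WithLp.equiv_symm_apply, WithLp.ofLp_toLp, Prod.mk_sub_mk]
    congr 1 <;> module
  have huv : ‖u‖ = ‖v‖ := by rwa [← dist_eq_norm, ← dist_eq_norm]
  rw [dist_eq_norm, dist_eq_norm, WithLp.prod_norm_eq_of_L2, hdiff, WithLp.toLp_fst,
    WithLp.toLp_snd, norm_sq_add_norm_sq_eq_of_norm_eq huv (cos_sq_add_sin_sq _), sqrt_sq (norm_nonneg _)]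
end

section
/- Let E = [p, q] be a segment of length ℓ in a metric space, identified with [0, ℓ], and let h : [0, ℓ] → ℝ² be an affine 1-Lipschitz map whose image is a segment of length ℓ′ ≤ ℓ (or a point). Fix n ≥ 1 and subdivide [0,ℓ] into n equal intervals with endpoints z₀,…,zₙ. Let u be a unit vector normal to the image segment (or any unit vector if the image is a point), s_n(x) = min_i |z_i − x|, k = √(1 − (ℓ′/ℓ)²), and w_n(x) = k·s_n(x)·u + h(x). Then: (a) w_n restricted to each half-interval [z_i, (z_i+z_{i+1})/2] and [(z_i+z_{i+1})/2, z_{i+1}] is an isometric embedding into ℝ²; (b) |w_n(x) − h(x)| ≤ ℓ/(2n) for all x. -/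
/-!
On each half-interval `s` is affine of slope `±1`, so `w x - w y = ±k (x - y) • u + (x - y) • v`
with `u ⊥ v`; by Pythagoras its squared norm is `(k² + (ℓ'/ℓ)²)(x - y)² = (x - y)²`, which is how
`k = √(1 - (ℓ'/ℓ)²)` was chosen. Part (b) holds because `‖w x - h x‖ = k s x ≤ s x` and every point
of `[0, ℓ]` is within half a mesh width `ℓ/(2n)` of a grid point.
-/

open Set

noncomputable def gridDist (n : ℕ) (d x : ℝ) : ℝ :=
  ⨅ j : Fin (n + 1), |x - (j : ℝ) * d|

section gridDist

variable {n : ℕ} {d x : ℝ}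

lemma gridDist_nonneg : 0 ≤ gridDist n d x :=
  le_ciInf fun _ => abs_nonneg _

lemma gridDist_le_abs_sub {j : ℕ} (hj : j ≤ n) : gridDist n d x ≤ |x - j * d| :=
  ciInf_le (Finite.bddBelow_range _) (⟨j, Nat.lt_succ_of_le hj⟩ : Fin (n + 1))

lemma gridDist_eq_min (hd : 0 < d) {i : ℕ} (hi : i < n) (hx : x ∈ Icc (i * d) ((i + 1) * d)) :
    gridDist n d x = min (x - i * d) ((i + 1) * d - x) := by
  apply le_antisymm
  · refine le_min ?_ ?_
    · simpa [abs_of_nonneg (sub_nonneg.2 hx.1)] using gridDist_le_abs_sub (x := x) (d := d) hi.le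
    · simpa [abs_sub_comm x, abs_of_nonneg (sub_nonneg.2 hx.2)] using
        gridDist_le_abs_sub (x := x) (d := d) (Nat.succ_le_of_lt hi)
  · refine le_ciInf fun j => ?_
    rcases le_or_gt (j : ℕ) i with hj | hj
    · have : (j : ℝ) * d ≤ i * d := by gcongr
      exact (min_le_left _ _).trans ((by linarith : x - i * d ≤ x - j * d).trans (le_abs_self _))
    · have : ((i : ℝ) + 1) * d ≤ j * d := by gcongr; exact_mod_cast Nat.succ_le_of_lt hj
      exact (min_le_right _ _).trans ((by linarith : (i + 1) * d - x ≤ -(x - j * d)).trans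
        (neg_le_abs _))

lemma gridDist_eq_sub_left (hd : 0 < d) {i : ℕ} (hi : i < n)
    (hx : x ∈ Icc (i * d) (i * d + d / 2)) : gridDist n d x = x - i * d := by
  rw [gridDist_eq_min hd hi ⟨hx.1, by linarith [hx.2]⟩, min_eq_left (by linarith [hx.2])]

lemma gridDist_eq_sub_right (hd : 0 < d) {i : ℕ} (hi : i < n)
    (hx : x ∈ Icc (i * d + d / 2) ((i + 1) * d)) : gridDist n d x = (i + 1) * d - x := by
  rw [gridDist_eq_min hd hi ⟨by linarith [hx.1], hx.2⟩, min_eq_right (by linarith [hx.1])]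

lemma gridDist_le_half (hd : 0 < d) (hx : x ∈ Icc 0 (n * d)) : gridDist n d x ≤ d / 2 := by
  -- `j` is the grid point nearest to `x`
  set j := ⌊x / d + 1 / 2⌋₊
  have hpos : 0 ≤ x / d + 1 / 2 := by have := div_nonneg hx.1 hd.le; linarith
  have hj_le : (j : ℝ) ≤ x / d + 1 / 2 := Nat.floor_le hpos
  have hj_gt : x / d + 1 / 2 < j + 1 := Nat.lt_floor_add_one _
  have hjn : j ≤ n := Nat.lt_succ_iff.1 <| (Nat.floor_lt hpos).2 <| by
    push_cast
    linarith [(div_le_iff₀ hd).2 hx.2]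
  calc gridDist n d x ≤ |x - j * d| := gridDist_le_abs_sub hjn
    _ = |(x / d - j) * d| := by rw [sub_mul, div_mul_cancel₀ x hd.ne']
    _ = |x / d - j| * d := by rw [abs_mul, abs_of_pos hd]
    _ ≤ 1 / 2 * d := by gcongr; exact abs_le.2 ⟨by linarith, by linarith⟩
    _ = d / 2 := by ring

end gridDist

section Zigzag

variable {E : Type*} [NormedAddCommGroup E] [InnerProductSpace ℝ E]

lemma norm_smul_add_smul_sq {u v : E} (hu : ‖u‖ = 1) (huv : inner ℝ u v = 0) (a b : ℝ) :
    ‖a • u + b • v‖ ^ 2 = a ^ 2 + b ^ 2 * ‖v‖ ^ 2 := by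
  have h := norm_add_sq_eq_norm_sq_add_norm_sq_real
    (by rw [real_inner_smul_left, real_inner_smul_right, huv, mul_zero, mul_zero] :
      inner ℝ (a • u) (b • v) = 0)
  rw [sq, h, norm_smul, norm_smul, hu, Real.norm_eq_abs, Real.norm_eq_abs]
  nlinarith [sq_abs a, sq_abs b]

lemma dist_zigzag_eq (c : E) {u v : E} (hu : ‖u‖ = 1) (huv : inner ℝ u v = 0) (hv : ‖v‖ ≤ 1)
    {a b x y : ℝ} (hab : |a - b| = |x - y|) :
    dist ((√(1 - ‖v‖ ^ 2) * a) • u + (c + x • v)) ((√(1 - ‖v‖ ^ 2) * b) • u + (c + y • v)) =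
      |x - y| := by
  have hk : √(1 - ‖v‖ ^ 2) ^ 2 = 1 - ‖v‖ ^ 2 := Real.sq_sqrt (by nlinarith [norm_nonneg v])
  rw [dist_eq_norm, ← Real.sqrt_sq (norm_nonneg _), ← Real.sqrt_sq_eq_abs,
    show (√(1 - ‖v‖ ^ 2) * a) • u + (c + x • v) - ((√(1 - ‖v‖ ^ 2) * b) • u + (c + y • v)) =
      (√(1 - ‖v‖ ^ 2) * (a - b)) • u + (x - y) • v by module,
    norm_smul_add_smul_sq hu huv, mul_pow, hk, ← sq_abs (a - b), hab, sq_abs]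
  ring_nf

lemma dist_smul_add_self_le {u : E} (hu : ‖u‖ = 1) {k a : ℝ} (hk : k ∈ Icc 0 1) (ha : 0 ≤ a)
    (p : E) : dist ((k * a) • u + p) p ≤ a := by
  rw [dist_add_self_left, norm_smul, hu, mul_one, Real.norm_eq_abs,
    abs_of_nonneg (mul_nonneg hk.1 ha)]
  exact mul_le_of_le_one_left ha hk.2

end Zigzag

theorem stmt9_general (ℓ ℓ' : ℝ) (hl : 0 < ℓ) (hle : ℓ' ≤ ℓ)
    (c v u : EuclideanSpace ℝ (Fin 2))
    (hv : ‖v‖ = ℓ' / ℓ) (hu : ‖u‖ = 1) (huv : (inner ℝ u v : ℝ) = 0)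
    (n : ℕ) (hn : 1 ≤ n)
    (h w : ℝ → EuclideanSpace ℝ (Fin 2))
    (hh : ∀ x, h x = c + x • v)
    (s : ℝ → ℝ) (hs : ∀ x, s x = ⨅ i : Fin (n + 1), |x - (i : ℝ) * (ℓ / n)|)
    (hw : ∀ x, w x = (Real.sqrt (1 - (ℓ' / ℓ) ^ 2) * s x) • u + h x) :
    (∀ i : Fin n,
      (∀ x ∈ Set.Icc ((i : ℝ) * (ℓ / n)) ((i : ℝ) * (ℓ / n) + ℓ / (2 * n)),
        ∀ y ∈ Set.Icc ((i : ℝ) * (ℓ / n)) ((i : ℝ) * (ℓ / n) + ℓ / (2 * n)),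
          dist (w x) (w y) = |x - y|) ∧
      (∀ x ∈ Set.Icc ((i : ℝ) * (ℓ / n) + ℓ / (2 * n)) (((i : ℝ) + 1) * (ℓ / n)),
        ∀ y ∈ Set.Icc ((i : ℝ) * (ℓ / n) + ℓ / (2 * n)) (((i : ℝ) + 1) * (ℓ / n)),
          dist (w x) (w y) = |x - y|)) ∧
    (∀ x ∈ Set.Icc (0 : ℝ) ℓ, dist (w x) (h x) ≤ ℓ / (2 * n)) := by
  have hs : ∀ x, s x = gridDist n (ℓ / n) x := hs
  have hn0 : (0 : ℝ) < n := by exact_mod_cast hn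
  have hd : 0 < ℓ / n := div_pos hl hn0
  have hhalf : ℓ / (2 * n) = ℓ / n / 2 := by rw [div_div, mul_comm]
  have hv1 : ‖v‖ ≤ 1 := hv ▸ (div_le_one hl).2 hle
  have hiso : ∀ x y, |s x - s y| = |x - y| → dist (w x) (w y) = |x - y| := fun x y hxy => by
    rw [hw, hw, hh, hh, ← hv]
    exact dist_zigzag_eq c hu huv hv1 hxy
  rw [hhalf]
  refine ⟨fun i => ⟨fun x hx y hy => hiso x y ?_, fun x hx y hy => hiso x y ?_⟩, fun x hx => ?_⟩
  · rw [hs, hs, gridDist_eq_sub_left hd i.isLt hx, gridDist_eq_sub_left hd i.isLt hy,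
      sub_sub_sub_cancel_right]
  · rw [hs, hs, gridDist_eq_sub_right hd i.isLt hx, gridDist_eq_sub_right hd i.isLt hy,
      sub_sub_sub_cancel_left, abs_sub_comm]
  · have hx' : x ∈ Icc 0 (n * (ℓ / n)) := by
      rwa [mul_div_cancel₀ ℓ hn0.ne']
    rw [hw, hs]
    refine (dist_smul_add_self_le hu ⟨Real.sqrt_nonneg _, ?_⟩ gridDist_nonneg _).trans
      (gridDist_le_half hd hx')
    exact Real.sqrt_le_one.2 (by nlinarith [hv ▸ norm_nonneg v])

/-- The zigzag construction. `h : [0,ℓ] → ℝ²` is the affine 1-Lipschitz map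
`h x = c + x • v` with `‖v‖ = ℓ'/ℓ`, `u` is a unit vector normal to the image,
`s x = minᵢ |x - zᵢ|` for the equally spaced points `zᵢ = i·ℓ/n`, and
`w x = (√(1-(ℓ'/ℓ)²)·s x) • u + h x`.  Then (a) `w` is distance preserving on each of the
half-intervals `[zᵢ, zᵢ + ℓ/(2n)]` and `[zᵢ + ℓ/(2n), zᵢ₊₁]`, and
(b) `|w x - h x| ≤ ℓ/(2n)` on `[0,ℓ]`. -/
theorem stmt9 (ℓ ℓ' : ℝ) (hl : 0 < ℓ) (hl0 : 0 ≤ ℓ') (hle : ℓ' ≤ ℓ)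
    (c v u : EuclideanSpace ℝ (Fin 2))
    (hv : ‖v‖ = ℓ' / ℓ) (hu : ‖u‖ = 1) (huv : (inner ℝ u v : ℝ) = 0)
    (n : ℕ) (hn : 1 ≤ n)
    (h w : ℝ → EuclideanSpace ℝ (Fin 2))
    (hh : ∀ x, h x = c + x • v)
    (s : ℝ → ℝ) (hs : ∀ x, s x = ⨅ i : Fin (n + 1), |x - (i : ℝ) * (ℓ / n)|)
    (hw : ∀ x, w x = (Real.sqrt (1 - (ℓ' / ℓ) ^ 2) * s x) • u + h x) :
    (∀ i : Fin n,
      (∀ x ∈ Set.Icc ((i : ℝ) * (ℓ / n)) ((i : ℝ) * (ℓ / n) + ℓ / (2 * n)),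
        ∀ y ∈ Set.Icc ((i : ℝ) * (ℓ / n)) ((i : ℝ) * (ℓ / n) + ℓ / (2 * n)),
          dist (w x) (w y) = |x - y|) ∧
      (∀ x ∈ Set.Icc ((i : ℝ) * (ℓ / n) + ℓ / (2 * n)) (((i : ℝ) + 1) * (ℓ / n)),
        ∀ y ∈ Set.Icc ((i : ℝ) * (ℓ / n) + ℓ / (2 * n)) (((i : ℝ) + 1) * (ℓ / n)),
          dist (w x) (w y) = |x - y|)) ∧
    (∀ x ∈ Set.Icc (0 : ℝ) ℓ, dist (w x) (h x) ≤ ℓ / (2 * n)) :=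
  stmt9_general ℓ ℓ' hl hle c v u hv hu huv n hn h w hh s hs hw
end

section
/- Let Δ be a non-degenerate 3-simplex (tetrahedron) in ℝ³ with faces F₁, F₂, F₃, F₄, and let ∂Δ carry its intrinsic (induced length) metric. There is no map f : ∂Δ → ℝ² whose restriction to each of the four faces Fᵢ is an isometric embedding (with respect to the Euclidean distance on each face). -/
/-!
Any two vertices of a tetrahedron lie on a common face, so such a map would preserve all six
edge lengths. Distances determine the Gram matrix of the edge vectors at a vertex, and with it
their linear independence; the images of the vertices would thus be four affinely independent
points in the plane.
-/

open Matrix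
open scoped RealInnerProductSpace Congruent

variable {ι E F P Q : Type*}

theorem LinearIndependent.of_gram_eq [Finite ι] [NormedAddCommGroup E] [InnerProductSpace ℝ E]
    [NormedAddCommGroup F] [InnerProductSpace ℝ F] {v : ι → E} {w : ι → F}
    (hv : LinearIndependent ℝ v) (h : gram ℝ v = gram ℝ w) : LinearIndependent ℝ w := by
  rw [← posDef_gram_iff_linearIndependent] at hv ⊢
  rwa [← h]

namespace Congruent

variable [NormedAddCommGroup E] [InnerProductSpace ℝ E] [MetricSpace P] [NormedAddTorsor E P]
  [NormedAddCommGroup F] [InnerProductSpace ℝ F] [MetricSpace Q] [NormedAddTorsor F Q]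
  {v₁ : ι → P} {v₂ : ι → Q}

theorem inner_vsub_vsub (h : v₁ ≅ v₂) (i j k : ι) :
    ⟪v₁ i -ᵥ v₁ k, v₁ j -ᵥ v₁ k⟫ = ⟪v₂ i -ᵥ v₂ k, v₂ j -ᵥ v₂ k⟫ := by
  simp_rw [real_inner_eq_norm_mul_self_add_norm_mul_self_sub_norm_sub_mul_self_div_two,
    vsub_sub_vsub_cancel_right, ← dist_eq_norm_vsub, h.dist_eq]

theorem affineIndependent [Finite ι] (h : v₁ ≅ v₂) (hv : AffineIndependent ℝ v₁) :
    AffineIndependent ℝ v₂ := by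
  cases isEmpty_or_nonempty ι with
  | inl _ => exact affineIndependent_of_subsingleton ℝ v₂
  | inr hne =>
    obtain ⟨k⟩ := hne
    rw [affineIndependent_iff_linearIndependent_vsub ℝ _ k] at hv ⊢
    refine hv.of_gram_eq ?_
    ext i j
    simp only [gram_apply, h.inner_vsub_vsub]

end Congruent

/-- The boundary of a non-degenerate tetrahedron in ℝ³ admits no map to ℝ² which is
distance preserving on each of the four faces. -/
theorem stmt10 (v : Fin 4 → EuclideanSpace ℝ (Fin 3)) (hv : AffineIndependent ℝ v) :
    ¬ ∃ f : EuclideanSpace ℝ (Fin 3) → EuclideanSpace ℝ (Fin 2),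
        ∀ i : Fin 4, ∀ x ∈ convexHull ℝ (v '' {j | j ≠ i}),
          ∀ y ∈ convexHull ℝ (v '' {j | j ≠ i}), dist (f x) (f y) = dist x y := by
  rintro ⟨f, hf⟩
  have hcong : v ≅ f ∘ v := Congruent.of_dist_eq fun j k => by
    obtain ⟨i, hji, hki⟩ : ∃ i : Fin 4, j ≠ i ∧ k ≠ i := by revert j k; decide
    exact (hf i (v j) (subset_convexHull ℝ _ ⟨j, hji, rfl⟩) (v k)
      (subset_convexHull ℝ _ ⟨k, hki, rfl⟩)).symm
  have hcard := (hcong.affineIndependent hv).card_le_finrank_succ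
  have hspan := Submodule.finrank_le (vectorSpan ℝ (Set.range (f ∘ v)))
  simp only [Fintype.card_fin, finrank_euclideanSpace_fin] at hcard hspan
  omega
end

section
/- There exists no 1-dimensional piecewise distance preserving map onto a lower dimension: if P is an m-dimensional polyhedral space admitting a piecewise distance preserving map f : P → ℝⁿ, then n ≥ m. -/
/-!
The vertices of a top-dimensional piece of `P` lift to points of `P` whose images under `f`
have the same pairwise distances as the vertices of a Euclidean `m`-simplex. Distances determine
the Gram matrix of the edge vectors at a vertex, and a positive definite Gram matrix forces linear
independence, so the images are `m + 1` affinely independent points of `ℝⁿ`; hence `m ≤ n`.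
-/

open Matrix

section EuclideanAffine

variable {V V' P P' : Type*} [NormedAddCommGroup V] [InnerProductSpace ℝ V] [MetricSpace P]
  [NormedAddTorsor V P] [NormedAddCommGroup V'] [InnerProductSpace ℝ V'] [MetricSpace P']
  [NormedAddTorsor V' P']

theorem real_inner_vsub_vsub_eq_dist_sq (a b c : P) :
    inner ℝ (a -ᵥ c) (b -ᵥ c) = (dist a c ^ 2 + dist b c ^ 2 - dist a b ^ 2) / 2 := by
  rw [real_inner_eq_norm_mul_self_add_norm_mul_self_sub_norm_sub_mul_self_div_two,
    vsub_sub_vsub_cancel_right, dist_eq_norm_vsub V, dist_eq_norm_vsub V, dist_eq_norm_vsub V]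
  ring

theorem AffineIndependent.of_dist_eq {ι : Type*} [Finite ι] {p : ι → P} {q : ι → P'}
    (hp : AffineIndependent ℝ p) (h : ∀ j k, dist (q j) (q k) = dist (p j) (p k)) :
    AffineIndependent ℝ q := by
  cases isEmpty_or_nonempty ι
  · exact affineIndependent_of_subsingleton ℝ q
  obtain ⟨i₀⟩ := ‹Nonempty ι›
  rw [affineIndependent_iff_linearIndependent_vsub ℝ _ i₀] at hp ⊢
  rw [← posDef_gram_iff_linearIndependent] at hp ⊢
  convert hp using 1
  ext j k
  simp only [gram_apply, real_inner_vsub_vsub_eq_dist_sq, h]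

end EuclideanAffine

theorem stmt11_general {P : Type*} [MetricSpace P] {m n N : ℕ}
    (S : Fin N → Set P) (dims : Fin N → ℕ)
    (hsimp : ∀ i, ∃ v : Fin (dims i + 1) → EuclideanSpace ℝ (Fin (dims i)),
      AffineIndependent ℝ v ∧
      ∃ φ : P → EuclideanSpace ℝ (Fin (dims i)),
        (∀ x ∈ S i, ∀ y ∈ S i, dist (φ x) (φ y) = dist x y) ∧
        φ '' S i = convexHull ℝ (Set.range v))
    (hdim : ∃ i, dims i = m)
    (f : P → EuclideanSpace ℝ (Fin n))
    (hf : ∀ i, ∀ x ∈ S i, ∀ y ∈ S i, dist (f x) (f y) = dist x y) :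
    m ≤ n := by
  obtain ⟨i, rfl⟩ := hdim
  obtain ⟨v, hv, φ, hφ, hφS⟩ := hsimp i
  have hlift : ∀ j, ∃ x ∈ S i, φ x = v j := fun j ↦ by
    rw [← Set.mem_image, hφS]
    exact subset_convexHull ℝ _ (Set.mem_range_self j)
  choose x hxS hxv using hlift
  have hfx : AffineIndependent ℝ (f ∘ x) := hv.of_dist_eq fun j k ↦ by
    simp only [Function.comp_apply, hf i _ (hxS j) _ (hxS k), ← hxv, hφ _ (hxS j) _ (hxS k)]
  have hcard := hfx.card_le_finrank_succ
  rw [Fintype.card_fin] at hcard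
  have hspan := (vectorSpan ℝ (Set.range (f ∘ x))).finrank_le
  rw [finrank_euclideanSpace_fin] at hspan
  omega

/-- If an `m`-dimensional polyhedral space `P` (given by a finite cover by pieces, each
isometric to a Euclidean simplex of dimension `dims i`, with some piece of dimension `m`)
admits a map `f : P → ℝⁿ` which is distance preserving on each piece, then `n ≥ m`. -/
theorem stmt11 {P : Type*} [MetricSpace P] {m n N : ℕ}
    (S : Fin N → Set P) (dims : Fin N → ℕ)
    (hcover : (⋃ i, S i) = Set.univ)
    (hsimp : ∀ i, ∃ v : Fin (dims i + 1) → EuclideanSpace ℝ (Fin (dims i)),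
      AffineIndependent ℝ v ∧
      ∃ φ : P → EuclideanSpace ℝ (Fin (dims i)),
        (∀ x ∈ S i, ∀ y ∈ S i, dist (φ x) (φ y) = dist x y) ∧
        φ '' S i = convexHull ℝ (Set.range v))
    (hdim : ∃ i, dims i = m)
    (f : P → EuclideanSpace ℝ (Fin n))
    (hf : ∀ i, ∀ x ∈ S i, ∀ y ∈ S i, dist (f x) (f y) = dist x y) :
    m ≤ n :=
  stmt11_general S dims hsimp hdim f hf
end

section
/- With f(x) = d(x)·u_{i(x)} as above on the unit square: the image f([0,1]²) is the union of n² line segments of length 1/(2n) emanating from the origin, so the total perimeter of the image (counting each segment twice) equals n. In particular, for n > 4 this exceeds the perimeter 4 of the original unit square. -/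
/-!
Each cell is a square of side `1/n`, and the distance to its boundary takes on it exactly the
values in `[0, 1/(2n)]`: at most half the side everywhere, and the value `t` at the point of the
horizontal mid-line at distance `t` from the left side. For `0 < t` that point lies in no other
cell, so `ι` must select this cell there and `f` hits `t • u p`; the value `0` is hit at the
origin, a corner of whichever cell contains it. The perimeter is then `2 · n² · 1/(2n) = n`.
-/

open Metric Set

section ClosedBox

variable {ι : Type*}

def closedBox (a b : ι → ℝ) : Set (EuclideanSpace ℝ ι) :=
  {y | ∀ i, y i ∈ Icc (a i) (b i)}

variable {a b : ι → ℝ} {y : EuclideanSpace ℝ ι}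

lemma mem_closedBox_of_forall_mem_Icc {r : ℝ} (hr₀ : 0 ≤ r)
    (hr : ∀ j, y j ∈ Icc (a j + r) (b j - r)) : y ∈ closedBox a b := fun j => by
  obtain ⟨h₁, h₂⟩ := hr j
  exact ⟨by linarith, by linarith⟩

variable [Fintype ι]

lemma interior_closedBox (a b : ι → ℝ) :
    interior (closedBox a b) = {y | ∀ i, y i ∈ Ioo (a i) (b i)} := by
  have hpre : closedBox a b =
      PiLp.homeomorph 2 (fun _ : ι => ℝ) ⁻¹' univ.pi fun i => Icc (a i) (b i) := by
    ext; simp [closedBox, PiLp.homeomorph, -pi_univ_Icc]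
  rw [hpre, ← Homeomorph.preimage_interior, interior_pi_set finite_univ]
  ext; simp [PiLp.homeomorph]

lemma mem_frontier_closedBox (hy : y ∈ closedBox a b) {i : ι} (hi : y i = a i ∨ y i = b i) :
    y ∈ frontier (closedBox a b) := by
  refine ⟨subset_closure hy, fun h => ?_⟩
  rw [interior_closedBox] at h
  have := h i
  rcases hi with hi | hi <;> simp [hi] at this

lemma exists_mem_frontier_closedBox_dist_eq [DecidableEq ι] (hy : y ∈ closedBox a b) (i : ι)
    {c : ℝ} (hc : c = a i ∨ c = b i) :
    ∃ z ∈ frontier (closedBox a b), dist y z = |y i - c| := by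
  set z := y + PiLp.single 2 i (c - y i)
  have hz : ∀ j, z j = if j = i then c else y j := by
    intro j; by_cases h : j = i <;> simp [z, h]
  refine ⟨z, mem_frontier_closedBox (fun j => ?_) (i := i) (by simpa [hz] using hc), ?_⟩
  · rw [hz]; split_ifs with h
    · subst h; rcases hc with rfl | rfl <;> simp [(hy j).1.trans (hy j).2]
    · exact hy j
  · rw [dist_self_add_right, PiLp.norm_single, Real.norm_eq_abs, abs_sub_comm]

lemma infDist_frontier_closedBox_le [DecidableEq ι] (hy : y ∈ closedBox a b) (i : ι) {c : ℝ}
    (hc : c = a i ∨ c = b i) : infDist y (frontier (closedBox a b)) ≤ |y i - c| := by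
  obtain ⟨z, hz, hdist⟩ := exists_mem_frontier_closedBox_dist_eq hy i hc
  exact hdist ▸ infDist_le_dist_of_mem hz

lemma infDist_frontier_closedBox_le_half (hy : y ∈ closedBox a b) (i : ι) :
    infDist y (frontier (closedBox a b)) ≤ (b i - a i) / 2 := by
  classical
  obtain ⟨hya, hyb⟩ := hy i
  rcases le_total (y i) ((a i + b i) / 2) with h | h
  · calc _ ≤ |y i - a i| := infDist_frontier_closedBox_le hy i (.inl rfl)
      _ ≤ _ := by rw [abs_of_nonneg (by linarith)]; linarith
  · calc _ ≤ |y i - b i| := infDist_frontier_closedBox_le hy i (.inr rfl)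
      _ ≤ _ := by rw [abs_of_nonpos (by linarith)]; linarith

lemma infDist_frontier_closedBox_eq {r : ℝ} (hr₀ : 0 ≤ r)
    (hr : ∀ j, y j ∈ Icc (a j + r) (b j - r)) {i : ι} (hi : y i = a i + r) :
    infDist y (frontier (closedBox a b)) = r := by
  classical
  obtain ⟨z, hz, hdist⟩ :=
    exists_mem_frontier_closedBox_dist_eq (mem_closedBox_of_forall_mem_Icc hr₀ hr) i (.inl rfl)
  rw [hi, add_sub_cancel_left, abs_of_nonneg hr₀] at hdist
  refine le_antisymm (hdist ▸ infDist_le_dist_of_mem hz) <|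
    (le_infDist ⟨z, hz⟩).2 fun w hw => ?_
  by_contra! hw_lt
  refine hw.2 (interior_closedBox a b ▸ fun j => ?_)
  have := (PiLp.dist_apply_le y w j).trans_lt hw_lt
  rw [Real.dist_eq, abs_lt] at this
  obtain ⟨h₁, h₂⟩ := hr j
  exact ⟨by linarith, by linarith⟩

end ClosedBox

lemma eq_of_mem_Icc_div_of_mem_Ioo_div {n y : ℝ} (hn : 0 < n) {j k : ℕ}
    (hj : y ∈ Icc (j / n) ((j + 1) / n)) (hk : y ∈ Ioo (k / n) ((k + 1) / n)) : j = k := by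
  have h₁ : (j : ℝ) < k + 1 := (div_lt_div_iff_of_pos_right hn).1 (hj.1.trans_lt hk.2)
  have h₂ : (k : ℝ) < j + 1 := (div_lt_div_iff_of_pos_right hn).1 (hk.1.trans_le hj.2)
  norm_cast at h₁ h₂
  omega

section Grid

variable {n : ℕ}

def gridCell (n : ℕ) (p : Fin n × Fin n) : Set (EuclideanSpace ℝ (Fin 2)) :=
  closedBox ![(p.1 : ℝ) / n, p.2 / n] ![((p.1 : ℝ) + 1) / n, (p.2 + 1) / n]

noncomputable def gridCellPoint (n : ℕ) (p : Fin n × Fin n) (t : ℝ) :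
    EuclideanSpace ℝ (Fin 2) :=
  !₂[p.1 / n + t, p.2 / n + 1 / (2 * n)]

@[simp] lemma gridCellPoint_apply_zero (p : Fin n × Fin n) (t : ℝ) :
    gridCellPoint n p t 0 = p.1 / n + t := rfl

@[simp] lemma gridCellPoint_apply_one (p : Fin n × Fin n) (t : ℝ) :
    gridCellPoint n p t 1 = p.2 / n + 1 / (2 * n) := rfl

lemma gridCell_subset_closedBox (p : Fin n × Fin n) : gridCell n p ⊆ closedBox 0 1 := by
  have hn : (0 : ℝ) < n := by exact_mod_cast p.1.pos
  have hle : ∀ k : Fin n, ((k : ℝ) + 1) / n ≤ 1 := fun k => by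
    rw [div_le_one hn]; exact_mod_cast k.isLt
  intro y hy i
  obtain ⟨h₁, h₂⟩ := hy i
  fin_cases i <;> exact ⟨(div_nonneg (Nat.cast_nonneg _) hn.le).trans h₁, h₂.trans (hle _)⟩

lemma infDist_frontier_gridCell_le {p : Fin n × Fin n} {x : EuclideanSpace ℝ (Fin 2)}
    (hx : x ∈ gridCell n p) : infDist x (frontier (gridCell n p)) ≤ 1 / (2 * n) := by
  refine (infDist_frontier_closedBox_le_half hx 0).trans_eq ?_
  simp only [Matrix.cons_val_zero]
  ring

lemma gridCellPoint_apply_mem_Icc (p : Fin n × Fin n) {t : ℝ} (ht : t ≤ 1 / (2 * n))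
    (j : Fin 2) : gridCellPoint n p t j ∈
      Icc (![(p.1 : ℝ) / n, p.2 / n] j + t) (![((p.1 : ℝ) + 1) / n, (p.2 + 1) / n] j - t) := by
  have h2 : (1 : ℝ) / n = 2 * (1 / (2 * n)) := by field_simp
  fin_cases j <;> simp only [Fin.zero_eta, Fin.mk_one, gridCellPoint_apply_zero,
    gridCellPoint_apply_one, Matrix.cons_val_zero, Matrix.cons_val_one, add_div] <;>
    constructor <;> linarith

lemma gridCellPoint_mem_gridCell (p : Fin n × Fin n) {t : ℝ} (ht₀ : 0 ≤ t)
    (ht : t ≤ 1 / (2 * n)) : gridCellPoint n p t ∈ gridCell n p :=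
  mem_closedBox_of_forall_mem_Icc ht₀ (gridCellPoint_apply_mem_Icc p ht)

lemma infDist_frontier_gridCell_gridCellPoint (p : Fin n × Fin n) {t : ℝ} (ht₀ : 0 ≤ t)
    (ht : t ≤ 1 / (2 * n)) : infDist (gridCellPoint n p t) (frontier (gridCell n p)) = t :=
  infDist_frontier_closedBox_eq ht₀ (gridCellPoint_apply_mem_Icc p ht) (i := 0)
    (gridCellPoint_apply_zero p t)

lemma eq_of_gridCellPoint_mem_gridCell {p q : Fin n × Fin n} {t : ℝ} (ht₀ : 0 < t)
    (ht : t ≤ 1 / (2 * n)) (hq : gridCellPoint n p t ∈ gridCell n q) : q = p := by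
  have hn : (0 : ℝ) < n := by exact_mod_cast p.1.pos
  have h2 : (1 : ℝ) / n = 2 * (1 / (2 * n)) := by field_simp
  have h₁ := eq_of_mem_Icc_div_of_mem_Ioo_div hn (hq 0)
    (k := p.1) (by simp only [gridCellPoint_apply_zero, add_div]; constructor <;> linarith)
  have h₂ := eq_of_mem_Icc_div_of_mem_Ioo_div hn (hq 1)
    (k := p.2) (by simp only [gridCellPoint_apply_one, add_div]; constructor <;> linarith)
  exact Prod.ext (Fin.ext h₁) (Fin.ext h₂)

lemma zero_mem_frontier_gridCell {q : Fin n × Fin n} (h : 0 ∈ gridCell n q) :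
    0 ∈ frontier (gridCell n q) := by
  refine mem_frontier_closedBox h (i := 0) (.inl ?_)
  have := (h 0).1
  simp only [Matrix.cons_val_zero] at this ⊢
  exact (le_antisymm this (by positivity)).symm

end Grid

theorem image_eq_iUnion_segments {n : ℕ} {u : Fin n × Fin n → EuclideanSpace ℝ (Fin 2)}
    {ι : EuclideanSpace ℝ (Fin 2) → Fin n × Fin n}
    (hι : ∀ x ∈ closedBox 0 1, x ∈ gridCell n (ι x))
    {f : EuclideanSpace ℝ (Fin 2) → EuclideanSpace ℝ (Fin 2)}
    (hf : ∀ x, f x = infDist x (frontier (gridCell n (ι x))) • u (ι x)) :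
    f '' closedBox 0 1 = ⋃ p, (fun t : ℝ => t • u p) '' Icc 0 (1 / (2 * n)) := by
  ext z
  simp only [mem_image, mem_iUnion]
  constructor
  · rintro ⟨x, hx, rfl⟩
    exact ⟨ι x, _, ⟨infDist_nonneg, infDist_frontier_gridCell_le (hι x hx)⟩, (hf x).symm⟩
  · rintro ⟨p, t, ⟨ht₀, ht⟩, rfl⟩
    -- On an edge shared by two cells `ι` may choose either, so `t = 0` is reached at the origin.
    rcases ht₀.eq_or_lt with rfl | ht₀
    · have h0 : (0 : EuclideanSpace ℝ (Fin 2)) ∈ closedBox 0 1 := fun i => by simp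
      refine ⟨0, h0, ?_⟩
      rw [hf, infDist_zero_of_mem (zero_mem_frontier_gridCell (hι 0 h0)), zero_smul, zero_smul]
    · set x := gridCellPoint n p t
      have hx : x ∈ closedBox 0 1 :=
        gridCell_subset_closedBox p (gridCellPoint_mem_gridCell p ht₀.le ht)
      refine ⟨x, hx, ?_⟩
      rw [hf, eq_of_gridCellPoint_mem_gridCell ht₀ ht (hι x hx),
        infDist_frontier_gridCell_gridCellPoint p ht₀.le ht]

lemma two_mul_sum_one_div_two_mul (n : ℕ) :
    2 * ∑ _p : Fin n × Fin n, 1 / (2 * (n : ℝ)) = n := by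
  rcases n.eq_zero_or_pos with rfl | hn
  · simp
  · simp only [Finset.sum_const, Finset.card_univ, Fintype.card_prod, Fintype.card_fin,
      nsmul_eq_mul]
    push_cast
    field_simp

theorem stmt16_general (n : ℕ)
    (u : Fin n × Fin n → EuclideanSpace ℝ (Fin 2))
    (Q : Fin n × Fin n → Set (EuclideanSpace ℝ (Fin 2)))
    (hQ : ∀ p, Q p = {y | (p.1 : ℝ) / n ≤ y 0 ∧ y 0 ≤ ((p.1 : ℝ) + 1) / n ∧
      (p.2 : ℝ) / n ≤ y 1 ∧ y 1 ≤ ((p.2 : ℝ) + 1) / n})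
    (S : Set (EuclideanSpace ℝ (Fin 2)))
    (hS : S = {y : EuclideanSpace ℝ (Fin 2) | y 0 ∈ Set.Icc (0:ℝ) 1 ∧ y 1 ∈ Set.Icc (0:ℝ) 1})
    (ι : EuclideanSpace ℝ (Fin 2) → Fin n × Fin n)
    (hι : ∀ x ∈ S, x ∈ Q (ι x))
    (f : EuclideanSpace ℝ (Fin 2) → EuclideanSpace ℝ (Fin 2))
    (hf : ∀ x, f x = Metric.infDist x (frontier (Q (ι x))) • u (ι x)) :
    (f '' S = ⋃ p : Fin n × Fin n, (fun t : ℝ => t • u p) '' Set.Icc 0 (1 / (2 * n))) ∧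
    (2 * ∑ _p : Fin n × Fin n, (1 / (2 * (n : ℝ))) = n) ∧
    (4 < n → (4 : ℝ) < 2 * ∑ _p : Fin n × Fin n, (1 / (2 * (n : ℝ)))) := by
  obtain rfl : Q = gridCell n := funext fun p => by
    ext y; simp [hQ, gridCell, closedBox, Fin.forall_fin_two, and_assoc]
  obtain rfl : S = closedBox 0 1 := by
    ext y; simp [hS, closedBox, Fin.forall_fin_two]
  refine ⟨image_eq_iUnion_segments hι hf, two_mul_sum_one_div_two_mul n, fun h => ?_⟩
  rw [two_mul_sum_one_div_two_mul]
  exact_mod_cast h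

/-- With `f x = d(x) • u (ι x)` as in the subdivision of the unit square into `n²`
subsquares: the image `f(S)` is the union of the `n²` segments of length `1/(2n)` from the
origin in the directions `u p`; the total perimeter of this image (each segment counted
twice) equals `n`, which exceeds the perimeter `4` of the square when `n > 4`. -/
theorem stmt16 (n : ℕ) (hn : 1 ≤ n)
    (u : Fin n × Fin n → EuclideanSpace ℝ (Fin 2))
    (hu : ∀ p, ‖u p‖ = 1) (huinj : Function.Injective u)
    (Q : Fin n × Fin n → Set (EuclideanSpace ℝ (Fin 2)))
    (hQ : ∀ p, Q p = {y | (p.1 : ℝ) / n ≤ y 0 ∧ y 0 ≤ ((p.1 : ℝ) + 1) / n ∧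
      (p.2 : ℝ) / n ≤ y 1 ∧ y 1 ≤ ((p.2 : ℝ) + 1) / n})
    (S : Set (EuclideanSpace ℝ (Fin 2)))
    (hS : S = {y : EuclideanSpace ℝ (Fin 2) | y 0 ∈ Set.Icc (0:ℝ) 1 ∧ y 1 ∈ Set.Icc (0:ℝ) 1})
    (ι : EuclideanSpace ℝ (Fin 2) → Fin n × Fin n)
    (hι : ∀ x ∈ S, x ∈ Q (ι x))
    (f : EuclideanSpace ℝ (Fin 2) → EuclideanSpace ℝ (Fin 2))
    (hf : ∀ x, f x = Metric.infDist x (frontier (Q (ι x))) • u (ι x)) :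
    (f '' S = ⋃ p : Fin n × Fin n, (fun t : ℝ => t • u p) '' Set.Icc 0 (1 / (2 * n))) ∧
    (2 * ∑ _p : Fin n × Fin n, (1 / (2 * (n : ℝ))) = n) ∧
    (4 < n → (4 : ℝ) < 2 * ∑ _p : Fin n × Fin n, (1 / (2 * (n : ℝ)))) :=
  stmt16_general n u Q hQ S hS ι hι f hf
end

section
/- Finite Kirszbraun in the plane (extension by one point): Let a₁,…,aₙ and b₁,…,bₙ be points in ℝ² with |aᵢ − aⱼ| ≥ |bᵢ − bⱼ| for all i, j, and let a be any additional point in ℝ². Then there exists b ∈ ℝ² such that |b − bᵢ| ≤ |a − aᵢ| for all i. -/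
/-!
Minimize `x ↦ maxᵢ (‖x - bᵢ‖ - rᵢ)` with `rᵢ = ‖a' - aᵢ‖`; a minimizer exists since the space is
proper. Suppose the minimum `m` is positive. Then the minimizer `x` lies in the convex hull of the
active centres (those with `‖x - bᵢ‖ - rᵢ = m`): otherwise some direction makes an acute angle with
every `bᵢ - x`, and a small step along it lowers all active distances. Write `x = ∑ wᵢ bᵢ` and put
`uᵢ = bᵢ - x`, `vᵢ = aᵢ - a'`. Then `‖vᵢ‖ < ‖uᵢ‖` and `‖uᵢ - uⱼ‖ ≤ ‖vᵢ - vⱼ‖`, which forces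
`⟪vᵢ, vⱼ⟫ < ⟪uᵢ, uⱼ⟫`, hence `0 ≤ ‖∑ wᵢ vᵢ‖² < ‖∑ wᵢ uᵢ‖² = 0`.
-/

open Finset Set Filter Topology
open scoped RealInnerProductSpace

section InnerProduct

variable {E F : Type*} [NormedAddCommGroup E] [InnerProductSpace ℝ E]
  [NormedAddCommGroup F] [InnerProductSpace ℝ F]

theorem inner_lt_inner_of_norm_lt_of_norm_sub_le {u₁ u₂ : E} {v₁ v₂ : F}
    (h₁ : ‖v₁‖ < ‖u₁‖) (h₂ : ‖v₂‖ < ‖u₂‖) (h : ‖u₁ - u₂‖ ≤ ‖v₁ - v₂‖) :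
    ⟪v₁, v₂⟫ < ⟪u₁, u₂⟫ := by
  have hsq : ‖u₁ - u₂‖ ^ 2 ≤ ‖v₁ - v₂‖ ^ 2 := by gcongr
  rw [norm_sub_sq_real, norm_sub_sq_real] at hsq
  have := norm_nonneg v₁
  have := norm_nonneg v₂
  nlinarith

theorem inner_sum_smul_sum_smul {ι : Type*} (s : Finset ι) (w : ι → ℝ) (u : ι → E) :
    ⟪∑ i ∈ s, w i • u i, ∑ j ∈ s, w j • u j⟫ = ∑ i ∈ s, ∑ j ∈ s, w i * w j * ⟪u i, u j⟫ := by
  rw [sum_inner]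
  refine sum_congr rfl fun i _ => ?_
  rw [inner_sum]
  refine sum_congr rfl fun j _ => ?_
  rw [real_inner_smul_left, real_inner_smul_right, mul_assoc]

theorem exists_inner_le_inner_of_sum_smul_eq_zero {ι : Type*} [Fintype ι] {w : ι → ℝ}
    (hw : w ∈ stdSimplex ℝ ι) {u : ι → E} (hu : ∑ i, w i • u i = 0) (v : ι → F) :
    ∃ i j, ⟪u i, u j⟫ ≤ ⟪v i, v j⟫ := by
  by_contra! H
  obtain ⟨k, -, hk⟩ := exists_lt_of_sum_lt (by simp [hw.2] : ∑ _ : ι, (0 : ℝ) < ∑ i, w i)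
  have hterm : ∀ i j, w i * w j * ⟪v i, v j⟫ ≤ w i * w j * ⟪u i, u j⟫ := fun i j =>
    mul_le_mul_of_nonneg_left (H i j).le (mul_nonneg (hw.1 i) (hw.1 j))
  have hdiag : w k * w k * ⟪v k, v k⟫ < w k * w k * ⟪u k, u k⟫ :=
    mul_lt_mul_of_pos_left (H k k) (mul_pos hk hk)
  have := calc
    0 ≤ ⟪∑ i, w i • v i, ∑ j, w j • v j⟫ := real_inner_self_nonneg
    _ = ∑ i, ∑ j, w i * w j * ⟪v i, v j⟫ := inner_sum_smul_sum_smul _ _ _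
    _ < ∑ i, ∑ j, w i * w j * ⟪u i, u j⟫ :=
      sum_lt_sum (fun i _ => sum_le_sum fun j _ => hterm i j)
        ⟨k, mem_univ _, sum_lt_sum (fun j _ => hterm k j) ⟨k, mem_univ _, hdiag⟩⟩
    _ = ⟪∑ i, w i • u i, ∑ j, w j • u j⟫ := (inner_sum_smul_sum_smul _ _ _).symm
  simp [hu] at this

theorem exists_forall_inner_sub_pos_of_notMem {K : Set E} (hK : Convex ℝ K) (hKc : IsComplete K)
    {x : E} (hx : x ∉ K) : ∃ v : E, ∀ y ∈ K, 0 < ⟪y - x, v⟫ := by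
  rcases K.eq_empty_or_nonempty with rfl | hne
  · exact ⟨0, by simp⟩
  obtain ⟨p, hpK, hp⟩ := exists_norm_eq_iInf_of_complete_convex hne hKc hK x
  have hobtuse := (norm_eq_iInf_iff_real_inner_le_zero hK hpK).1 hp
  have hpx : p - x ≠ 0 := sub_ne_zero.2 fun h => hx (h ▸ hpK)
  refine ⟨p - x, fun y hy => ?_⟩
  have := hobtuse y hy
  calc 0 < ‖p - x‖ ^ 2 := by positivity
    _ ≤ ⟪y - x, p - x⟫ := by
      rw [show y - x = (y - p) + (p - x) by abel, inner_add_left, real_inner_self_eq_norm_sq,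
        ← neg_sub x p, inner_neg_right, real_inner_comm]
      linarith

theorem eventually_dist_add_smul_lt {x y v : E} (h : 0 < ⟪y - x, v⟫) :
    ∀ᶠ t in 𝓝[>] (0 : ℝ), dist (x + t • v) y < dist x y := by
  have hsq : ∀ t : ℝ, dist (x + t • v) y ^ 2 =
      dist x y ^ 2 - t * (2 * ⟪y - x, v⟫ - t * ‖v‖ ^ 2) := by
    intro t
    rw [dist_eq_norm, dist_eq_norm, show x + t • v - y = t • v - (y - x) by abel,
      norm_sub_sq_real, real_inner_smul_left, norm_smul, real_inner_comm, ← norm_neg (x - y), neg_sub]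
    simp only [Real.norm_eq_abs, mul_pow, sq_abs]
    ring
  have hsmall : ∀ᶠ t in 𝓝 (0 : ℝ), t * ‖v‖ ^ 2 < 2 * ⟪y - x, v⟫ :=
    (continuous_id.mul continuous_const).continuousAt.eventually_lt continuousAt_const
      (by simpa using h)
  filter_upwards [self_mem_nhdsWithin, nhdsWithin_le_nhds hsmall] with t (ht : 0 < t) hts
  refine lt_of_pow_lt_pow_left₀ 2 dist_nonneg ?_
  rw [hsq]
  nlinarith

end InnerProduct

theorem convexHull_range_eq_image_stdSimplex {ι E : Type*} [Fintype ι] [AddCommGroup E]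
    [Module ℝ E] (z : ι → E) :
    convexHull ℝ (range z) = (fun w => ∑ i, w i • z i) '' stdSimplex ℝ ι := by
  classical
  have hz : (fun w : ι → ℝ => ∑ i, w i • z i) = Fintype.linearCombination ℝ z := by
    ext w; simp [Fintype.linearCombination_apply]
  rw [hz, ← convexHull_basis_eq_stdSimplex, LinearMap.image_convexHull, ← range_comp]
  congr
  ext i
  simp [Fintype.linearCombination_apply]

section MaxExcess

variable {ι E : Type*} [Fintype ι] [Nonempty ι] [NormedAddCommGroup E]

def maxExcess (c : ι → E) (r : ι → ℝ) (x : E) : ℝ :=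
  univ.sup' univ_nonempty fun i => dist x (c i) - r i

variable {c : ι → E} {r : ι → ℝ}

theorem dist_sub_le_maxExcess (x : E) (i : ι) : dist x (c i) - r i ≤ maxExcess c r x :=
  le_sup' (fun i => dist x (c i) - r i) (mem_univ i)

theorem maxExcess_lt_iff {x : E} {m : ℝ} : maxExcess c r x < m ↔ ∀ i, dist x (c i) - r i < m := by
  simp [maxExcess, sup'_lt_iff]

theorem continuous_maxExcess (c : ι → E) (r : ι → ℝ) : Continuous (maxExcess c r) :=
  Continuous.finset_sup'_apply _ fun i _ => by fun_prop

theorem exists_forall_maxExcess_le [ProperSpace E] (c : ι → E) (r : ι → ℝ) :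
    ∃ x, ∀ y, maxExcess c r x ≤ maxExcess c r y := by
  obtain ⟨i⟩ := ‹Nonempty ι›
  refine (continuous_maxExcess c r).exists_forall_le <|
    tendsto_atTop_mono (dist_sub_le_maxExcess · i) ?_
  exact tendsto_atTop_add_const_right _ _ (tendsto_dist_right_cocompact_atTop (c i))

theorem mem_convexHull_of_forall_maxExcess_le [InnerProductSpace ℝ E] {x : E}
    (hx : ∀ y, maxExcess c r x ≤ maxExcess c r y) :
    x ∈ convexHull ℝ (range fun i : {i // dist x (c i) - r i = maxExcess c r x} => c i) := by
  by_contra hx'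
  obtain ⟨v, hv⟩ := exists_forall_inner_sub_pos_of_notMem (convex_convexHull ℝ _)
    ((finite_range _).isCompact_convexHull (𝕜 := ℝ)).isComplete hx'
  have hdescent : ∀ᶠ t in 𝓝[>] (0 : ℝ), ∀ i, dist (x + t • v) (c i) - r i < maxExcess c r x := by
    refine eventually_all.2 fun i => ?_
    by_cases hi : dist x (c i) - r i = maxExcess c r x
    · filter_upwards [eventually_dist_add_smul_lt
        (hv _ (subset_convexHull ℝ _ ⟨⟨i, hi⟩, rfl⟩))] with t ht
      linarith
    · have hlt := (dist_sub_le_maxExcess x i).lt_of_ne hi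
      have hcont : Continuous fun t : ℝ => dist (x + t • v) (c i) - r i := by fun_prop
      exact nhdsWithin_le_nhds <|
        hcont.continuousAt.eventually_lt continuousAt_const (by simpa using hlt)
  obtain ⟨t, ht⟩ := hdescent.exists
  exact (hx (x + t • v)).not_gt (maxExcess_lt_iff.2 ht)

end MaxExcess

theorem exists_forall_dist_le_of_forall_dist_le {ι E F : Type*} [Fintype ι]
    [NormedAddCommGroup E] [InnerProductSpace ℝ E] [ProperSpace E]
    [NormedAddCommGroup F] [InnerProductSpace ℝ F] {a : ι → F} {b : ι → E}
    (h : ∀ i j, dist (b i) (b j) ≤ dist (a i) (a j)) (a' : F) :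
    ∃ b' : E, ∀ i, dist b' (b i) ≤ dist a' (a i) := by
  classical
  cases isEmpty_or_nonempty ι
  · exact ⟨0, isEmptyElim⟩
  set r := fun i => dist a' (a i)
  obtain ⟨x, hx⟩ := exists_forall_maxExcess_le b r
  set m := maxExcess b r x
  suffices hm : m ≤ 0 from ⟨x, fun i => by linarith [dist_sub_le_maxExcess (c := b) (r := r) x i]⟩
  by_contra! hm
  have hxhull := mem_convexHull_of_forall_maxExcess_le hx
  rw [convexHull_range_eq_image_stdSimplex] at hxhull
  obtain ⟨w, hw, hwx⟩ := hxhull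
  have hu : ∑ i, w i • (b i - x) = 0 := by
    simp only [smul_sub, sum_sub_distrib, ← sum_smul, hw.2, one_smul, hwx, sub_self]
  obtain ⟨i, j, hij⟩ := exists_inner_le_inner_of_sum_smul_eq_zero hw hu fun i => a i - a'
  have hnorm : ∀ i : {i // dist x (b i) - r i = m}, ‖a i - a'‖ < ‖b i - x‖ := fun i => by
    rw [← dist_eq_norm, ← dist_eq_norm, dist_comm, dist_comm (b i)]
    linarith [i.2]
  refine hij.not_gt (inner_lt_inner_of_norm_lt_of_norm_sub_le (hnorm i) (hnorm j) ?_)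
  simpa only [sub_sub_sub_cancel_right, ← dist_eq_norm] using h i j

/-- Single-point Kirszbraun extension in the plane: if `|aᵢ - aⱼ| ≥ |bᵢ - bⱼ|` for all
`i, j` and `a` is a further point, then there is `b` with `|b - bᵢ| ≤ |a - aᵢ|` for all `i`. -/
theorem stmt17 {n : ℕ} (a b : Fin n → EuclideanSpace ℝ (Fin 2))
    (h : ∀ i j, dist (b i) (b j) ≤ dist (a i) (a j))
    (a' : EuclideanSpace ℝ (Fin 2)) :
    ∃ b' : EuclideanSpace ℝ (Fin 2), ∀ i, dist b' (b i) ≤ dist a' (a i) :=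
  exists_forall_dist_le_of_forall_dist_le h a'
end

section
/- Kirszbraun's theorem in the plane: let Q ⊆ ℝ² be an arbitrary subset and f : Q → ℝ² a 1-Lipschitz map. Then there exists a 1-Lipschitz map F : ℝ² → ℝ² with F|_Q = f. -/
/-!
By Zorn's lemma on nonexpanding relations containing the graph of `f`, it suffices to extend a
nonexpanding relation by one point `z`: find `w` with `‖w - y‖ ≤ ‖z - x‖` for every pair `(x, y)`.
Compactness of closed balls reduces this to finitely many pairs `(xᵢ, yᵢ)`. Let `w₀` minimise
`λ(w) = maxᵢ ‖w - yᵢ‖ / ‖z - xᵢ‖`. Then `w₀` lies in the convex hull of the `yᵢ` at which the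
maximum is attained, since moving towards that hull would decrease all of them. Writing
`w₀ = ∑ μᵢ yᵢ`, the identity `∑ᵢⱼ μᵢ μⱼ ‖uᵢ - uⱼ‖² = 2 (∑ᵢ μᵢ ‖uᵢ - a‖² - ‖∑ᵢ μᵢ uᵢ - a‖²)`,
applied to the `yᵢ` with `a = w₀` and to the `xᵢ` with `a = z`, together with
`‖yᵢ - yⱼ‖ ≤ ‖xᵢ - xⱼ‖` gives `λ(w₀)² ∑ μᵢ ‖z - xᵢ‖² ≤ ∑ μᵢ ‖z - xᵢ‖²`, hence `λ(w₀) ≤ 1`.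
-/

open Filter Finset Metric Set Topology

section Metric

variable {α β : Type*} [PseudoMetricSpace α] [PseudoMetricSpace β]

def NonexpandingRel (T : Set (α × β)) : Prop :=
  ∀ p ∈ T, ∀ q ∈ T, dist p.2 q.2 ≤ dist p.1 q.1

theorem NonexpandingRel.mono {S T : Set (α × β)} (hT : NonexpandingRel T) (hST : S ⊆ T) :
    NonexpandingRel S :=
  fun p hp q hq => hT p (hST hp) q (hST hq)

theorem NonexpandingRel.insert {T : Set (α × β)} (hT : NonexpandingRel T) {z : α} {w : β}
    (hw : ∀ p ∈ T, dist w p.2 ≤ dist z p.1) : NonexpandingRel (insert (z, w) T) := by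
  rintro p (rfl | hp) q (rfl | hq)
  · simp
  · exact hw q hq
  · simpa only [dist_comm] using hw p hp
  · exact hT p hp q hq

theorem IsChain.nonexpandingRel_sUnion {c : Set (Set (α × β))} (hchain : IsChain (· ⊆ ·) c)
    (hc : ∀ T ∈ c, NonexpandingRel T) : NonexpandingRel (⋃₀ c) := by
  rintro p ⟨S, hS, hpS⟩ q ⟨T, hT, hqT⟩
  rcases hchain.total hS hT with hST | hTS
  · exact hc T hT p (hST hpS) q hqT
  · exact hc S hS p hpS q (hTS hqT)

theorem exists_forall_dist_le_of_forall_finset [ProperSpace β] (T : Set (α × β)) (z : α)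
    (h : ∀ s : Finset (α × β), ↑s ⊆ T → ∃ w, ∀ p ∈ s, dist w p.2 ≤ dist z p.1) :
    ∃ w, ∀ p ∈ T, dist w p.2 ≤ dist z p.1 := by
  classical
  rcases T.eq_empty_or_nonempty with rfl | ⟨p₀, hp₀⟩
  · obtain ⟨w, -⟩ := h ∅ (by simp)
    exact ⟨w, by simp⟩
  obtain ⟨w, -, hw⟩ := (isCompact_closedBall p₀.2 (dist z p₀.1)).inter_iInter_nonempty
    (fun p : T => closedBall p.1.2 (dist z p.1.1)) (fun _ => isClosed_closedBall) fun u => by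
      obtain ⟨w, hw⟩ := h (insert p₀ (u.map (Function.Embedding.subtype _))) <| by
        simpa using insert_subset hp₀ (Subtype.coe_image_subset T u)
      exact ⟨w, hw p₀ (mem_insert_self _ _),
        mem_iInter₂.2 fun p hp => hw p (mem_insert_of_mem (mem_map_of_mem _ hp))⟩
  exact ⟨w, fun p hp => mem_iInter.1 hw ⟨p, hp⟩⟩

end Metric

theorem LipschitzOnWith.exists_extension_of_forall_exists_dist_le {α β : Type*}
    [PseudoMetricSpace α] [MetricSpace β]
    (hext : ∀ T : Set (α × β), NonexpandingRel T → ∀ z, ∃ w, ∀ p ∈ T, dist w p.2 ≤ dist z p.1)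
    {f : α → β} {Q : Set α} (hf : LipschitzOnWith 1 f Q) :
    ∃ g : α → β, LipschitzWith 1 g ∧ EqOn g f Q := by
  obtain ⟨T, hfT, hT⟩ := zorn_subset_nonempty {T | NonexpandingRel T}
    (fun c hc hchain _ => ⟨⋃₀ c, hchain.nonexpandingRel_sUnion hc, fun _ => subset_sUnion_of_mem⟩)
    ((fun x => (x, f x)) '' Q) (by
      rintro _ ⟨x, hx, rfl⟩ _ ⟨y, hy, rfl⟩
      simpa using hf.dist_le_mul x hx y hy)
  have htotal (z : α) : ∃ w, (z, w) ∈ T := by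
    obtain ⟨w, hw⟩ := hext T hT.prop z
    exact ⟨w, hT.mem_of_prop_insert (hT.prop.insert hw)⟩
  choose g hg using htotal
  refine ⟨g, LipschitzWith.of_dist_le_mul fun x y => ?_, fun x hx => ?_⟩
  · simpa using hT.prop _ (hg x) _ (hg y)
  · exact dist_le_zero.1 (by simpa using hT.prop _ (hg x) _ (hfT ⟨x, hx, rfl⟩))

section InnerProductSpace

variable {E F : Type*} [NormedAddCommGroup E] [InnerProductSpace ℝ E]
  [NormedAddCommGroup F] [InnerProductSpace ℝ F]

theorem sum_sum_mul_norm_sub_sq {ι : Type*} (s : Finset ι) {μ : ι → ℝ} (hμ : ∑ i ∈ s, μ i = 1)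
    (u : ι → E) (a : E) :
    ∑ i ∈ s, ∑ j ∈ s, μ i * μ j * ‖u i - u j‖ ^ 2
      = 2 * (∑ i ∈ s, μ i * ‖u i - a‖ ^ 2 - ‖∑ i ∈ s, μ i • u i - a‖ ^ 2) := by
  have hcentre : ∑ i ∈ s, μ i • u i - a = ∑ i ∈ s, μ i • (u i - a) := by
    simp only [smul_sub, sum_sub_distrib, ← sum_smul, hμ, one_smul]
  have hinner : ‖∑ i ∈ s, μ i • (u i - a)‖ ^ 2
      = ∑ i ∈ s, ∑ j ∈ s, μ i * μ j * inner ℝ (u i - a) (u j - a) := by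
    simp only [← real_inner_self_eq_norm_sq, sum_inner, inner_sum, real_inner_smul_left,
      real_inner_smul_right, mul_assoc]
    exact sum_congr rfl fun i _ => sum_congr rfl fun j _ => by rw [real_inner_comm]
  have hsplit (i j : ι) : μ i * μ j * ‖u i - u j‖ ^ 2 = μ i * ‖u i - a‖ ^ 2 * μ j
      + μ i * (μ j * ‖u j - a‖ ^ 2) - 2 * (μ i * μ j * inner ℝ (u i - a) (u j - a)) := by
    rw [← sub_sub_sub_cancel_right (u i) (u j) a, norm_sub_sq_real]
    ring
  simp only [hsplit, sum_add_distrib, sum_sub_distrib, ← mul_sum, ← sum_mul, hμ, ← hinner,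
    ← hcentre]
  ring

theorem norm_add_smul_sub_lt {w v y : F} (hwv : w ≠ v) (hy : inner ℝ (w - v) (y - v) ≤ 0)
    {t : ℝ} (ht₀ : 0 < t) (ht₂ : t < 2) : ‖w + t • (v - w) - y‖ < ‖w - y‖ := by
  have hexpand : ‖w + t • (v - w) - y‖ ^ 2
      = ‖w - y‖ ^ 2 - t * (2 - t) * ‖w - v‖ ^ 2 + 2 * t * inner ℝ (w - v) (y - v) := by
    have h1 : w + t • (v - w) - y = (w - y) - t • (w - v) := by
      rw [← neg_sub w v, smul_neg]; abel
    have h2 : inner ℝ (w - y) (w - v) = ‖w - v‖ ^ 2 - inner ℝ (w - v) (y - v) := by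
      rw [← sub_sub_sub_cancel_right w y v, inner_sub_left, real_inner_self_eq_norm_sq,
        real_inner_comm]
    rw [h1, norm_sub_sq_real, real_inner_smul_right, norm_smul, h2, Real.norm_of_nonneg ht₀.le]
    ring
  have hpos : 0 < t * (2 - t) * ‖w - v‖ ^ 2 := by
    have := sub_ne_zero.2 hwv
    positivity
  refine lt_of_pow_lt_pow_left₀ 2 (norm_nonneg _) ?_
  nlinarith

theorem NonexpandingRel.sum_mul_norm_sub_centerMass_sq_le {s : Finset (E × F)}
    (hs : NonexpandingRel (s : Set (E × F))) {μ : E × F → ℝ} (hμ₀ : ∀ p ∈ s, 0 ≤ μ p)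
    (hμ₁ : ∑ p ∈ s, μ p = 1) (z : E) :
    ∑ p ∈ s, μ p * ‖p.2 - ∑ q ∈ s, μ q • q.2‖ ^ 2 ≤ ∑ p ∈ s, μ p * ‖p.1 - z‖ ^ 2 := by
  have hsnd := sum_sum_mul_norm_sub_sq s hμ₁ Prod.snd (∑ q ∈ s, μ q • q.2)
  have hfst := sum_sum_mul_norm_sub_sq s hμ₁ Prod.fst z
  have hle : ∑ p ∈ s, ∑ q ∈ s, μ p * μ q * ‖p.2 - q.2‖ ^ 2
      ≤ ∑ p ∈ s, ∑ q ∈ s, μ p * μ q * ‖p.1 - q.1‖ ^ 2 := by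
    gcongr with p hp q hq
    · exact mul_nonneg (hμ₀ p hp) (hμ₀ q hq)
    · simpa only [dist_eq_norm] using hs p hp q hq
  rw [sub_self, norm_zero] at hsnd
  nlinarith [sq_nonneg ‖∑ p ∈ s, μ p • p.1 - z‖]

theorem mem_convexHull_of_forall_exists_le_norm_sub {ι : Type*} (s : Finset ι) (y : ι → F)
    (ρ : ι → ℝ) {w₀ : F} (hw₀ : ∀ i ∈ s, ‖w₀ - y i‖ ≤ ρ i)
    (hmin : ∀ w, ∃ i ∈ s, ρ i ≤ ‖w - y i‖) :
    w₀ ∈ convexHull ℝ (y '' ↑(s.filter fun i => ‖w₀ - y i‖ = ρ i)) := by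
  set K := convexHull ℝ (y '' ↑(s.filter fun i => ‖w₀ - y i‖ = ρ i))
  have hK : IsCompact K := ((s.filter _).finite_toSet.image y).isCompact_convexHull ℝ
  have hKne : K.Nonempty := by
    obtain ⟨i, hi, hρ⟩ := hmin w₀
    exact ⟨y i, subset_convexHull ℝ _ ⟨i, mem_filter.2 ⟨hi, (hw₀ i hi).antisymm hρ⟩, rfl⟩⟩
  by_contra hw₀K
  obtain ⟨v, hvK, hv⟩ := exists_norm_eq_iInf_of_complete_convex hKne hK.isComplete
    (convex_convexHull ℝ _) w₀
  have hobtuse := (norm_eq_iInf_iff_real_inner_le_zero (convex_convexHull ℝ _) hvK).1 hv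
  have hwv : w₀ ≠ v := fun h => hw₀K (h ▸ hvK)
  have hstrict : ∀ᶠ t in 𝓝[>] (0 : ℝ), ∀ i ∈ s, ‖w₀ + t • (v - w₀) - y i‖ < ρ i := by
    refine (eventually_all_finset s).2 fun i hi => ?_
    rcases (hw₀ i hi).lt_or_eq with hlt | heq
    · have hcont : Continuous fun t : ℝ => ‖w₀ + t • (v - w₀) - y i‖ := by fun_prop
      refine nhdsWithin_le_nhds (hcont.tendsto' 0 _ ?_ |>.eventually (gt_mem_nhds hlt))
      simp
    · filter_upwards [Ioo_mem_nhdsGT (by norm_num : (0 : ℝ) < 2)] with t ht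
      refine heq ▸ norm_add_smul_sub_lt hwv (hobtuse _ ?_) ht.1 ht.2
      exact subset_convexHull ℝ _ ⟨i, mem_filter.2 ⟨hi, heq⟩, rfl⟩
  obtain ⟨t, ht⟩ := hstrict.exists
  obtain ⟨i, hi, hρ⟩ := hmin (w₀ + t • (v - w₀))
  exact (ht i hi).not_ge hρ

theorem NonexpandingRel.le_one_of_mem_convexHull {A : Finset (E × F)}
    (hA : NonexpandingRel (A : Set (E × F))) {z : E} (hz : ∀ p ∈ A, p.1 ≠ z) {w : F}
    (hw : w ∈ convexHull ℝ (Prod.snd '' (A : Set (E × F)))) {c : ℝ}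
    (hc : ∀ p ∈ A, ‖w - p.2‖ = c * ‖z - p.1‖) : c ≤ 1 := by
  obtain ⟨q, hq, rfl⟩ : w ∈ Prod.snd '' convexHull ℝ (A : Set (E × F)) :=
    (LinearMap.snd ℝ E F).image_convexHull _ ▸ hw
  obtain ⟨μ, hμ₀, hμ₁, rfl⟩ := Finset.mem_convexHull'.1 hq
  have hvar := hA.sum_mul_norm_sub_centerMass_sq_le hμ₀ hμ₁ z
  simp only [Prod.snd_sum, Prod.smul_snd] at hvar hc
  have hS : 0 < ∑ p ∈ A, μ p * ‖p.1 - z‖ ^ 2 := by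
    obtain ⟨p, hp, hμp⟩ : ∃ p ∈ A, 0 < μ p := exists_lt_of_sum_lt (by simp [hμ₁])
    refine sum_pos' (fun p hp => mul_nonneg (hμ₀ p hp) (sq_nonneg _)) ⟨p, hp, ?_⟩
    exact mul_pos hμp (pow_pos (norm_pos_iff.2 (sub_ne_zero.2 (hz p hp))) 2)
  have hscale : ∑ p ∈ A, μ p * ‖p.2 - ∑ q ∈ A, μ q • q.2‖ ^ 2
      = c ^ 2 * ∑ p ∈ A, μ p * ‖p.1 - z‖ ^ 2 := by
    rw [mul_sum]
    refine sum_congr rfl fun p hp => ?_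
    rw [norm_sub_rev, hc p hp, norm_sub_rev z]
    ring
  have hc2 : c ^ 2 ≤ 1 := le_of_mul_le_mul_right (by linarith) hS
  nlinarith

theorem NonexpandingRel.exists_forall_norm_sub_le [ProperSpace F] {s : Finset (E × F)}
    (hs : NonexpandingRel (s : Set (E × F))) (z : E) :
    ∃ w : F, ∀ p ∈ s, ‖w - p.2‖ ≤ ‖z - p.1‖ := by
  rcases s.eq_empty_or_nonempty with rfl | hne
  · exact ⟨0, by simp⟩
  by_cases hz : ∃ p ∈ s, p.1 = z
  · obtain ⟨p, hp, rfl⟩ := hz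
    exact ⟨p.2, fun q hq => by simpa only [dist_eq_norm] using hs p hp q hq⟩
  push Not at hz
  have hr : ∀ p ∈ s, 0 < ‖z - p.1‖ := fun p hp => norm_pos_iff.2 (sub_ne_zero.2 (hz p hp).symm)
  set g : F → ℝ := fun w => s.sup' hne fun p => ‖w - p.2‖ / ‖z - p.1‖
  have hcoercive : Tendsto g (cocompact F) atTop := by
    obtain ⟨p₀, hp₀⟩ := hne
    refine tendsto_atTop_mono (fun w => le_sup' _ hp₀) (Tendsto.atTop_div_const (hr p₀ hp₀) ?_)
    exact (tendsto_dist_right_cocompact_atTop p₀.2).congr fun w => dist_eq_norm w p₀.2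
  obtain ⟨w₀, hw₀⟩ := (show Continuous g by fun_prop).exists_forall_le hcoercive
  have hle : ∀ p ∈ s, ‖w₀ - p.2‖ ≤ g w₀ * ‖z - p.1‖ :=
    fun p hp => (div_le_iff₀ (hr p hp)).1 (le_sup' (fun p => ‖w₀ - p.2‖ / ‖z - p.1‖) hp)
  have hhull := mem_convexHull_of_forall_exists_le_norm_sub s Prod.snd _ hle fun w => by
    obtain ⟨p, hp, hgp⟩ := exists_mem_eq_sup' hne fun p => ‖w - p.2‖ / ‖z - p.1‖
    exact ⟨p, hp, (le_div_iff₀ (hr p hp)).1 (hgp ▸ hw₀ w)⟩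
  have hg : g w₀ ≤ 1 := (hs.mono (coe_subset.2 (filter_subset _ s))).le_one_of_mem_convexHull
    (fun p hp => hz p (mem_filter.1 hp).1) hhull fun p hp => (mem_filter.1 hp).2
  exact ⟨w₀, fun p hp => (hle p hp).trans (mul_le_of_le_one_left (norm_nonneg _) hg)⟩

theorem LipschitzOnWith.exists_lipschitzWith_one_extension [ProperSpace F] {f : E → F}
    {Q : Set E} (hf : LipschitzOnWith 1 f Q) : ∃ g : E → F, LipschitzWith 1 g ∧ EqOn g f Q :=
  hf.exists_extension_of_forall_exists_dist_le fun T hT z =>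
    exists_forall_dist_le_of_forall_finset T z fun s hs => by
      simpa only [dist_eq_norm] using (hT.mono hs).exists_forall_norm_sub_le z

end InnerProductSpace

/-- Kirszbraun's theorem in the plane: a 1-Lipschitz map defined on an arbitrary subset
`Q ⊆ ℝ²` extends to a 1-Lipschitz map on all of ℝ². -/
theorem stmt18 (Q : Set (EuclideanSpace ℝ (Fin 2)))
    (f : EuclideanSpace ℝ (Fin 2) → EuclideanSpace ℝ (Fin 2))
    (hf : LipschitzOnWith 1 f Q) :
    ∃ F : EuclideanSpace ℝ (Fin 2) → EuclideanSpace ℝ (Fin 2),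
      LipschitzWith 1 F ∧ ∀ x ∈ Q, F x = f x :=
  hf.exists_lipschitzWith_one_extension
end
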